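/- Let R be a nontrivial ring, n ≥ 2, and M a monoid with at least two elements. Then the full matrix ring Matₙ(R) (Mathlib: Matrix (Fin n) (Fin n) R) is not M-central Armendariz. -/

import Mathlib

/-!
Every `M`-central Armendariz ring `S` with `M` nontrivial has central idempotents. For an
idempotent `e`, an element `r` and `g ≠ 1` in `M`, put `c = e r (1 - e)`; then
`(e - c g) ((1 - e) + c g) = 0` in `S[M]`, so `e c = c` is central, and since `c e = 0` this
forces `c = 0`. Applied to `e` and `1 - e` this gives `e r = e r e = r e`. In `Matₙ(R)` with
`n ≥ 2` the matrix unit `E₁₁` is an idempotent that does not commute with `E₁₂`.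
-/

def IsCentralArmendariz (M S : Type*) [Monoid M] [Ring S] : Prop :=
  ∀ α β : MonoidAlgebra S M, α * β = 0 →
    ∀ g ∈ α.coeff.support, ∀ h ∈ β.coeff.support, α.coeff g * β.coeff h ∈ Set.center S

theorem mem_center_of_mul_mul_one_sub_eq_zero {S : Type*} [Ring S] {e : S}
    (h : ∀ r, e * r * (1 - e) = 0) (h' : ∀ r, (1 - e) * r * e = 0) : e ∈ Set.center S := by
  refine Semigroup.mem_center_iff.mpr fun r => ?_
  have hl : e * r = e * r * e := by
    simpa only [mul_sub, mul_one, sub_eq_zero] using h r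
  have hr : r * e = e * r * e := by
    simpa only [sub_mul, one_mul, sub_eq_zero] using h' r
  rw [hr, ← hl]

namespace IsCentralArmendariz

variable {M S : Type*} [Monoid M] [Ring S]

theorem coeff_mul_coeff_mem_center (hS : IsCentralArmendariz M S) {α β : MonoidAlgebra S M}
    (hαβ : α * β = 0) (g h : M) : α.coeff g * β.coeff h ∈ Set.center S := by
  by_cases hg : g ∈ α.coeff.support
  · by_cases hh : h ∈ β.coeff.support
    · exact hS α β hαβ g hg h hh
    · rw [Finsupp.notMem_support_iff.mp hh, mul_zero]
      exact Set.zero_mem_center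
  · rw [Finsupp.notMem_support_iff.mp hg, zero_mul]
    exact Set.zero_mem_center

theorem mul_mul_one_sub_eq_zero [Nontrivial M] (hS : IsCentralArmendariz M S) {e : S}
    (he : IsIdempotentElem e) (r : S) : e * r * (1 - e) = 0 := by
  obtain ⟨g, hg⟩ := exists_ne (1 : M)
  set c := e * r * (1 - e) with hc
  have hec : e * c = c := by rw [hc, ← mul_assoc, ← mul_assoc, he.eq]
  have hce : c * e = 0 := by rw [hc, mul_assoc, sub_mul, one_mul, he.eq, sub_self, mul_zero]
  have hc1e : c * (1 - e) = c := by rw [mul_sub, mul_one, hce, sub_zero]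
  have hcc : c * c = 0 := by
    rw [show c * c = c * e * (r * (1 - e)) by simp only [hc, mul_assoc], hce, zero_mul]
  set α : MonoidAlgebra S M := .single 1 e - .single g c
  set β : MonoidAlgebra S M := .single 1 (1 - e) + .single g c
  have hαβ : α * β = 0 := by
    simp only [α, β, sub_mul, mul_add, MonoidAlgebra.single_mul_single, one_mul, mul_one, hec,
      hc1e, hcc, he.mul_one_sub_self, MonoidAlgebra.single_zero]
    abel
  have hα : α.coeff 1 = e := by simp [α, MonoidAlgebra.coeff_single, hg.symm]
  have hβ : β.coeff g = c := by simp [β, MonoidAlgebra.coeff_single, hg.symm]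
  have hcentral : c ∈ Set.center S := by
    simpa only [hα, hβ, hec] using hS.coeff_mul_coeff_mem_center hαβ 1 g
  rw [← hec, Semigroup.mem_center_iff.mp hcentral e, hce]

theorem isIdempotentElem_mem_center [Nontrivial M] (hS : IsCentralArmendariz M S) {e : S}
    (he : IsIdempotentElem e) : e ∈ Set.center S :=
  mem_center_of_mul_mul_one_sub_eq_zero (hS.mul_mul_one_sub_eq_zero he)
    fun r => by simpa only [sub_sub_cancel] using hS.mul_mul_one_sub_eq_zero he.one_sub r

end IsCentralArmendariz

namespace Matrix

variable {n R : Type*} [Fintype n] [DecidableEq n]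

theorem isIdempotentElem_single_one [Semiring R] (i : n) :
    IsIdempotentElem (single i i (1 : R)) := by
  rw [IsIdempotentElem, single_mul_single_same, one_mul]

theorem single_one_notMem_center [Semiring R] [Nontrivial R] {i j : n} (hij : i ≠ j) :
    single i i (1 : R) ∉ Set.center (Matrix n n R) := fun h => by
  have hcomm := Semigroup.mem_center_iff.mp h (single i j 1)
  rw [single_mul_single_of_ne _ _ _ _ hij.symm, single_mul_single_same, one_mul] at hcomm
  simpa using congrFun (congrFun hcomm i) j

end Matrix

/-- For a nontrivial ring `R`, `n ≥ 2`, and a monoid `M` with at least two elements,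
the matrix ring `Matₙ(R)` is not `M`-central Armendariz. -/
theorem stmt_16 (M R : Type*) [Monoid M] [Nontrivial M] [Ring R] [Nontrivial R]
    (n : ℕ) (hn : 2 ≤ n) :
    ¬ (∀ α β : MonoidAlgebra (Matrix (Fin n) (Fin n) R) M, α * β = 0 →
      ∀ g ∈ α.coeff.support, ∀ h ∈ β.coeff.support,
        α.coeff g * β.coeff h ∈ Set.center (Matrix (Fin n) (Fin n) R)) := by
  intro H
  have hij : (⟨0, by omega⟩ : Fin n) ≠ ⟨1, by omega⟩ := by simp [Fin.ext_iff]
  exact Matrix.single_one_notMem_center hij <|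
    IsCentralArmendariz.isIdempotentElem_mem_center H (Matrix.isIdempotentElem_single_one _)
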